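/- Let 𝒦 be a convex geometry on a finite set E with set of rooted circuits 𝒞, and let T ⊆ E. Then the family {T ∩ X : X ∈ 𝒦} is a convex geometry on the ground set T, and its set of rooted circuits is exactly the trace 𝒞:T = {(X, e) ∈ 𝒞 : X ⊆ T and e ∈ T}. -/

import Mathlib

open Set

variable {α : Type*}

/-- A closure system on a ground set `E`: a family of subsets of `E` containing `E`
and closed under pairwise intersection. -/
def IsClosureSystem (E : Set α) (K : Set (Set α)) : Prop :=
  (∀ A ∈ K, A ⊆ E) ∧ E ∈ K ∧ ∀ A ∈ K, ∀ B ∈ K, A ∩ B ∈ K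

/-- The closure operator `τ(X) = ⋂ {A ∈ K : X ⊆ A}`. -/
def closureOp (K : Set (Set α)) (X : Set α) : Set α :=
  ⋂₀ {A | A ∈ K ∧ X ⊆ A}

/-- The extreme operator `ex(X) = {x ∈ X : x ∉ τ(X \ {x})}`. -/
def extremeOp (K : Set (Set α)) (X : Set α) : Set α :=
  {x | x ∈ X ∧ x ∉ closureOp K (X \ {x})}

/-- A rooted circuit `(X, e)` of a closure system `K` on ground set `E`:
`e ∉ X` and `X` is minimal under inclusion with `e ∈ τ(X)`. -/
def IsRootedCircuit (E : Set α) (K : Set (Set α)) (X : Set α) (e : α) : Prop :=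
  X ⊆ E ∧ e ∈ E ∧ e ∉ X ∧ e ∈ closureOp K X ∧
    ∀ Y ⊆ X, e ∈ closureOp K Y → Y = X

/-- A convex geometry: a closure system in which every nonempty closed set has a
nonempty extreme set. -/
def IsConvexGeometry (E : Set α) (K : Set (Set α)) : Prop :=
  IsClosureSystem E K ∧ ∀ X ∈ K, X.Nonempty → (extremeOp K X).Nonempty

/-- A convex geometry has stem size 2 if every rooted circuit has stem of size 2. -/
def StemSize2 (E : Set α) (K : Set (Set α)) : Prop :=
  ∀ X e, IsRootedCircuit E K X e → X.ncard = 2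

/-!
For `Z ⊆ T` the closure in the trace family is `T ∩ τ(Z)`, so for points of `T` membership in
the closure of subsets of `T` is the same in both systems. This makes extreme sets of subsets
of `T`, and the minimality defining rooted circuits with stem and root in `T`, coincide.
Nonempty extreme sets of arbitrary nonempty `Y ⊆ E` exist because `ex(τ(Y)) ⊆ ex(Y)` and, `E`
being finite, `τ(Y)` is a finite intersection of closed sets, hence closed.
-/

section ClosureOp

variable {E : Set α} {K : Set (Set α)}

lemma subset_closureOp (K : Set (Set α)) (X : Set α) : X ⊆ closureOp K X :=
  fun _ hx _ hA => hA.2 hx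

lemma closureOp_mono (K : Set (Set α)) {X Y : Set α} (h : X ⊆ Y) :
    closureOp K X ⊆ closureOp K Y :=
  fun _ hx A hA => hx A ⟨hA.1, h.trans hA.2⟩

lemma IsClosureSystem.closureOp_mem (hE : E.Finite) (hK : IsClosureSystem E K) {Y : Set α}
    (hY : Y ⊆ E) : closureOp K Y ∈ K := by
  have hInf : InfClosed K := fun A hA B hB => hK.2.2 A hA B hB
  exact hInf.sInf_mem_of_nonempty (hE.finite_subsets.subset fun A hA => hK.1 A hA.1)
    ⟨E, hK.2.1, hY⟩ fun A hA => hA.1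

lemma extremeOp_closureOp_subset (K : Set (Set α)) (Y : Set α) :
    extremeOp K (closureOp K Y) ⊆ extremeOp K Y := by
  rintro x ⟨hxY', hx⟩
  have hxY : x ∈ Y := by
    by_contra hxY
    have hY : Y ⊆ closureOp K Y \ {x} :=
      fun y hy => ⟨subset_closureOp K Y hy, by rintro rfl; exact hxY hy⟩
    exact hx (closureOp_mono K hY hxY')
  exact ⟨hxY, fun h => hx (closureOp_mono K (sdiff_subset_sdiff_left (subset_closureOp K Y)) h)⟩

lemma IsConvexGeometry.extremeOp_nonempty (hE : E.Finite) (hK : IsConvexGeometry E K)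
    {Y : Set α} (hY : Y ⊆ E) (hne : Y.Nonempty) : (extremeOp K Y).Nonempty :=
  (hK.2 _ (hK.1.closureOp_mem hE hY) (hne.mono (subset_closureOp K Y))).mono
    (extremeOp_closureOp_subset K Y)

end ClosureOp

def traceFamily (T : Set α) (K : Set (Set α)) : Set (Set α) := {Y | ∃ X ∈ K, Y = T ∩ X}

section Trace

variable {E T : Set α} {K : Set (Set α)}

lemma closureOp_traceFamily (hEK : E ∈ K) (hT : T ⊆ E) {Z : Set α} (hZ : Z ⊆ T) :
    closureOp (traceFamily T K) Z = T ∩ closureOp K Z := by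
  ext x
  constructor
  · intro hx
    refine ⟨(hx _ ⟨⟨E, hEK, rfl⟩, subset_inter hZ (hZ.trans hT)⟩).1, fun A hA => ?_⟩
    exact (hx _ ⟨⟨A, hA.1, rfl⟩, subset_inter hZ hA.2⟩).2
  · rintro ⟨hxT, hxc⟩ _ ⟨⟨X, hXK, rfl⟩, hZA⟩
    exact ⟨hxT, hxc _ ⟨hXK, fun z hz => (hZA hz).2⟩⟩

lemma mem_closureOp_traceFamily_iff (hEK : E ∈ K) (hT : T ⊆ E) {Z : Set α} (hZ : Z ⊆ T)
    {e : α} (he : e ∈ T) : e ∈ closureOp (traceFamily T K) Z ↔ e ∈ closureOp K Z := by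
  rw [closureOp_traceFamily hEK hT hZ, mem_inter_iff, and_iff_right he]

lemma IsClosureSystem.traceFamily (hK : IsClosureSystem E K) (hT : T ⊆ E) :
    IsClosureSystem T (traceFamily T K) := by
  refine ⟨?_, ⟨E, hK.2.1, (inter_eq_left.mpr hT).symm⟩, ?_⟩
  · rintro _ ⟨X, -, rfl⟩
    exact inter_subset_left
  · rintro _ ⟨X, hX, rfl⟩ _ ⟨Y, hY, rfl⟩
    exact ⟨X ∩ Y, hK.2.2 X hX Y hY, (inter_inter_distrib_left T X Y).symm⟩

lemma extremeOp_traceFamily (hEK : E ∈ K) (hT : T ⊆ E) {Y : Set α} (hY : Y ⊆ T) :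
    extremeOp (traceFamily T K) Y = extremeOp K Y := by
  ext x
  refine and_congr_right fun hx => not_congr ?_
  exact mem_closureOp_traceFamily_iff hEK hT (sdiff_subset.trans hY) (hY hx)

lemma IsConvexGeometry.traceFamily (hE : E.Finite) (hK : IsConvexGeometry E K) (hT : T ⊆ E) :
    IsConvexGeometry T (traceFamily T K) := by
  refine ⟨hK.1.traceFamily hT, ?_⟩
  rintro _ ⟨X, -, rfl⟩ hne
  rw [extremeOp_traceFamily hK.1.2.1 hT inter_subset_left]
  exact hK.extremeOp_nonempty hE (inter_subset_left.trans hT) hne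

lemma isRootedCircuit_traceFamily_iff_of_subset (hEK : E ∈ K) (hT : T ⊆ E) {X : Set α} {e : α}
    (hXT : X ⊆ T) (heT : e ∈ T) :
    IsRootedCircuit T (traceFamily T K) X e ↔ IsRootedCircuit E K X e := by
  have hcl : ∀ Y ⊆ X, e ∈ closureOp (traceFamily T K) Y ↔ e ∈ closureOp K Y :=
    fun Y hY => mem_closureOp_traceFamily_iff hEK hT (hY.trans hXT) heT
  simp only [IsRootedCircuit, hXT, heT, hXT.trans hT, hT heT, true_and, hcl X subset_rfl]
  exact and_congr_right' <| and_congr_right' <| forall₂_congr fun Y hY => imp_congr_left (hcl Y hY)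

lemma isRootedCircuit_traceFamily_iff (hEK : E ∈ K) (hT : T ⊆ E) {X : Set α} {e : α} :
    IsRootedCircuit T (traceFamily T K) X e ↔ IsRootedCircuit E K X e ∧ X ⊆ T ∧ e ∈ T :=
  ⟨fun h => ⟨(isRootedCircuit_traceFamily_iff_of_subset hEK hT h.1 h.2.1).1 h, h.1, h.2.1⟩,
    fun ⟨h, hXT, heT⟩ => (isRootedCircuit_traceFamily_iff_of_subset hEK hT hXT heT).2 h⟩

end Trace

theorem stmt2 (E T : Set α) (hE : E.Finite) (K : Set (Set α))
    (hK : IsConvexGeometry E K) (hT : T ⊆ E) :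
    IsConvexGeometry T {Y | ∃ X ∈ K, Y = T ∩ X} ∧
      {p : Set α × α | IsRootedCircuit T {Y | ∃ X ∈ K, Y = T ∩ X} p.1 p.2} =
        {p : Set α × α | IsRootedCircuit E K p.1 p.2 ∧ p.1 ⊆ T ∧ p.2 ∈ T} :=
  ⟨hK.traceFamily hE hT, Set.ext fun _ => isRootedCircuit_traceFamily_iff hK.1.2.1 hT⟩
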